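/- arXiv:2506.11897 — 2 statements merged into one kernel-verified Lean document; each statement's English description precedes it below -/
import Mathlib

section
/- For any f ∈ C²([a,b]) and any breakpoint sequence X_b over [a,b], there exists a unique not-a-knot cubic spline p ∈ 𝕊₃²(X_b) that interpolates f at X_b. -/
/-!
Uniqueness. The difference of two interpolants is a not-a-knot spline vanishing at every
breakpoint. For a cubic piece vanishing at both ends of `[l i, l (i + 1)]`, the slopes at the
ends are determined by the second derivatives `M i`, `M (i + 1)` there, so `C¹`-continuity
gives the classical moment equations, and the not-a-knot conditions say that `M` is affine on
`[l 0, l 2]` and on `[l (N - 2), l N]`. Eliminating `M 0` and `M N`, the system for the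
interior moments is strictly diagonally dominant, so all moments vanish and so does every piece.

Existence. The splines `p(x) + ∑ⱼ cⱼ (x - l (j + 2))₊³` with `p` cubic satisfy the smoothness
and not-a-knot conditions automatically and depend linearly on `N + 1` parameters. Their
evaluation at the `N + 1` breakpoints is injective by uniqueness, hence surjective.
-/

open Polynomial

/-- `q : ℕ → Polynomial ℝ` (with `q i` relevant for `i < N`) is the family of cubic pieces
of a not-a-knot cubic spline in `𝕊₃²(X_b)`, over the breakpoints `l 0 < l 1 < ⋯ < l N`,
interpolating `f` at the breakpoints.  The pieces are cubic polynomials glued `C²` at the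
interior breakpoints; the not-a-knot condition says the first two pieces coincide and the
last two pieces coincide. -/
def IsNotAKnotInterp (N : ℕ) (l : ℕ → ℝ) (f : ℝ → ℝ) (q : ℕ → Polynomial ℝ) : Prop :=
  (∀ i < N, (q i).degree ≤ 3) ∧
  (∀ i, i + 1 < N → (q i).eval (l (i + 1)) = (q (i + 1)).eval (l (i + 1))) ∧
  (∀ i, i + 1 < N →
    ((q i).derivative).eval (l (i + 1)) = ((q (i + 1)).derivative).eval (l (i + 1))) ∧
  (∀ i, i + 1 < N →
    ((q i).derivative.derivative).eval (l (i + 1)) =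
      ((q (i + 1)).derivative.derivative).eval (l (i + 1))) ∧
  q 0 = q 1 ∧ q (N - 2) = q (N - 1) ∧
  (∀ i < N, (q i).eval (l i) = f (l i)) ∧
  (q (N - 1)).eval (l N) = f (l N)

lemma exists_eq_cubic {p : ℝ[X]} (hp : p.degree ≤ 3) :
    ∃ a b c d : ℝ, p = C a + C b * X + C c * X ^ 2 + C d * X ^ 3 := by
  refine ⟨p.coeff 0, p.coeff 1, p.coeff 2, p.coeff 3, ?_⟩
  conv_lhs => rw [p.as_sum_range' 4 (Nat.lt_succ_of_le (natDegree_le_iff_degree_le.2 hp))]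
  simp [Finset.sum_range_succ, ← C_mul_X_pow_eq_monomial]

lemma cubic_derivative_eval_left {p : ℝ[X]} (hp : p.degree ≤ 3) {a b : ℝ} (hab : a ≠ b)
    (ha : p.eval a = 0) (hb : p.eval b = 0) :
    6 * p.derivative.eval a =
      -(b - a) * (2 * p.derivative.derivative.eval a + p.derivative.derivative.eval b) := by
  obtain ⟨c₀, c₁, c₂, c₃, rfl⟩ := exists_eq_cubic hp
  simp at ha hb ⊢
  apply mul_left_cancel₀ (sub_ne_zero.2 hab.symm)
  linear_combination 6 * hb - 6 * ha

lemma cubic_derivative_eval_right {p : ℝ[X]} (hp : p.degree ≤ 3) {a b : ℝ} (hab : a ≠ b)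
    (ha : p.eval a = 0) (hb : p.eval b = 0) :
    6 * p.derivative.eval b =
      (b - a) * (p.derivative.derivative.eval a + 2 * p.derivative.derivative.eval b) := by
  obtain ⟨c₀, c₁, c₂, c₃, rfl⟩ := exists_eq_cubic hp
  simp at ha hb ⊢
  apply mul_left_cancel₀ (sub_ne_zero.2 hab.symm)
  linear_combination 6 * hb - 6 * ha

lemma cubic_moment_equation {p r : ℝ[X]} (hp : p.degree ≤ 3) (hr : r.degree ≤ 3) {a b c : ℝ}
    (hab : a ≠ b) (hbc : b ≠ c) (hpa : p.eval a = 0) (hpb : p.eval b = 0) (hrb : r.eval b = 0)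
    (hrc : r.eval c = 0) (hC₁ : p.derivative.eval b = r.derivative.eval b) :
    (b - a) * (p.derivative.derivative.eval a + 2 * p.derivative.derivative.eval b) +
      (c - b) * (2 * r.derivative.derivative.eval b + r.derivative.derivative.eval c) = 0 := by
  linear_combination cubic_derivative_eval_left hr hbc hrb hrc -
    cubic_derivative_eval_right hp hab hpa hpb + 6 * hC₁

lemma cubic_second_derivative_collinear {p : ℝ[X]} (hp : p.degree ≤ 3) (a b c : ℝ) :
    (c - b) * (p.derivative.derivative.eval b - p.derivative.derivative.eval a) =
      (b - a) * (p.derivative.derivative.eval c - p.derivative.derivative.eval b) := by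
  obtain ⟨c₀, c₁, c₂, c₃, rfl⟩ := exists_eq_cubic hp
  simp
  ring

lemma cubic_eq_zero_of_eval_eq_zero {p : ℝ[X]} (hp : p.degree ≤ 3) {a b : ℝ} (hab : a ≠ b)
    (ha : p.eval a = 0) (hb : p.eval b = 0)
    (ha₂ : p.derivative.derivative.eval a = 0) (hb₂ : p.derivative.derivative.eval b = 0) :
    p = 0 := by
  obtain ⟨c₀, c₁, c₂, c₃, rfl⟩ := exists_eq_cubic hp
  simp at ha hb ha₂ hb₂
  have hba : b - a ≠ 0 := sub_ne_zero.2 hab.symm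
  have h₃ : c₃ = 0 := by
    have : (b - a) * (6 * c₃) = 0 := by linear_combination hb₂ - ha₂
    simpa [hba] using this
  have h₂ : c₂ = 0 := by subst h₃; linarith
  have h₁ : c₁ = 0 := by
    have : (b - a) * c₁ = 0 := by subst h₂ h₃; linear_combination hb - ha
    simpa [hba] using this
  have h₀ : c₀ = 0 := by subst h₁ h₂ h₃; linarith
  simp [h₀, h₁, h₂, h₃]

lemma eq_zero_of_mul_eq_of_abs_le {a b c x y z : ℝ} (h : a * x = b * y + c * z)
    (hy : |y| ≤ |x|) (hz : |z| ≤ |x|) (hdom : |b| + |c| < a) : x = 0 := by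
  have ha : 0 < a := by linarith [abs_nonneg b, abs_nonneg c]
  have : a * |x| ≤ (|b| + |c|) * |x| := by
    calc a * |x| = |b * y + c * z| := by rw [← h, abs_mul, abs_of_pos ha]
      _ ≤ |b| * |y| + |c| * |z| := by
          simpa only [abs_mul] using abs_add_le (b * y) (c * z)
      _ ≤ (|b| + |c|) * |x| := by
          rw [add_mul]; gcongr
  by_contra hx
  have := abs_pos.2 hx
  nlinarith

lemma notAKnot_moments_eq_zero {n : ℕ} {h M : ℕ → ℝ} (hpos : ∀ i ≤ n + 2, 0 < h i)
    (hmom : ∀ i ≤ n + 1,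
      h i * (M i + 2 * M (i + 1)) + h (i + 1) * (2 * M (i + 1) + M (i + 2)) = 0)
    (hnak₀ : h 1 * (M 1 - M 0) = h 0 * (M 2 - M 1))
    (hnak : h (n + 2) * (M (n + 2) - M (n + 1)) = h (n + 1) * (M (n + 3) - M (n + 2))) :
    ∀ i ≤ n + 3, M i = 0 := by
  obtain ⟨k, hk, hmax⟩ := (Finset.Icc 1 (n + 2)).exists_max_image (fun i => |M i|) ⟨1, by simp⟩
  simp only [Finset.mem_Icc] at hk hmax
  have h₀ := hpos 0 (by omega)
  have h₁ := hpos 1 (by omega)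
  have hn₁ := hpos (n + 1) (by omega)
  have hn₂ := hpos (n + 2) le_rfl
  have hMk : M k = 0 := by
    rcases (show k = 1 ∨ k = n + 2 ∨ (2 ≤ k ∧ k ≤ n + 1) by omega) with rfl | rfl | ⟨hk₂, hkn⟩
    -- after eliminating `M 0` by `hnak₀`, row 1 reads `(h 0 + 2 h 1) M 1 = (h 0 - h 1) M 2`
    · refine eq_zero_of_mul_eq_of_abs_le (a := h 0 + 2 * h 1) (b := h 0 - h 1) (c := 0)
        (y := M 2) (z := M 2) ?_ (hmax 2 (by omega)) (hmax 2 (by omega)) ?_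
      · apply mul_left_cancel₀ (by positivity : h 0 + h 1 ≠ 0)
        linear_combination h 1 * hmom 0 (by omega) + h 0 * hnak₀
      · rw [abs_zero, add_zero, abs_lt]; constructor <;> linarith
    · refine eq_zero_of_mul_eq_of_abs_le (a := h (n + 2) + 2 * h (n + 1))
        (b := h (n + 2) - h (n + 1)) (c := 0)
        (y := M (n + 1)) (z := M (n + 1)) ?_ (hmax _ (by omega)) (hmax _ (by omega)) ?_
      · apply mul_left_cancel₀ (by positivity : h (n + 1) + h (n + 2) ≠ 0)
        linear_combination h (n + 1) * hmom (n + 1) le_rfl + h (n + 2) * hnak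
      · rw [abs_zero, add_zero, abs_lt]; constructor <;> linarith
    · obtain ⟨j, rfl⟩ : ∃ j, k = j + 1 := ⟨k - 1, by omega⟩
      have hj := hpos j (by omega)
      have hj₁ := hpos (j + 1) (by omega)
      refine eq_zero_of_mul_eq_of_abs_le (a := 2 * (h j + h (j + 1))) (b := -h j)
        (c := -h (j + 1)) (y := M j) (z := M (j + 2)) ?_ (hmax _ (by omega))
        (hmax _ (by omega)) ?_
      · linear_combination hmom j (by omega)
      · rw [abs_neg, abs_neg, abs_of_pos hj, abs_of_pos hj₁]; linarith
  have hinner : ∀ i, 1 ≤ i → i ≤ n + 2 → M i = 0 := fun i hi₁ hi₂ =>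
    abs_nonpos_iff.1 (by simpa [hMk] using hmax i ⟨hi₁, hi₂⟩)
  intro i hi
  rcases (show i = 0 ∨ i = n + 3 ∨ (1 ≤ i ∧ i ≤ n + 2) by omega) with rfl | rfl | ⟨hi₁, hi₂⟩
  · rw [hinner 1 le_rfl (by omega), hinner 2 (by omega) (by omega)] at hnak₀
    nlinarith
  · rw [hinner (n + 1) (by omega) (by omega), hinner (n + 2) (by omega) le_rfl] at hnak
    nlinarith
  · exact hinner i hi₁ hi₂

theorem IsNotAKnotInterp.sub {N : ℕ} {l : ℕ → ℝ} {f g : ℝ → ℝ} {q r : ℕ → ℝ[X]}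
    (hq : IsNotAKnotInterp N l f q) (hr : IsNotAKnotInterp N l g r) :
    IsNotAKnotInterp N l (f - g) (q - r) := by
  obtain ⟨hq₁, hq₂, hq₃, hq₄, hq₅, hq₆, hq₇, hq₈⟩ := hq
  obtain ⟨hr₁, hr₂, hr₃, hr₄, hr₅, hr₆, hr₇, hr₈⟩ := hr
  exact ⟨fun i hi => (degree_sub_le _ _).trans (max_le (hq₁ i hi) (hr₁ i hi)),
    fun i hi => by simp [hq₂ i hi, hr₂ i hi], fun i hi => by simp [hq₃ i hi, hr₃ i hi],
    fun i hi => by simp [hq₄ i hi, hr₄ i hi], by simp [hq₅, hr₅], by simp [hq₆, hr₆],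
    fun i hi => by simp [hq₇ i hi, hr₇ i hi], by simp [hq₈, hr₈]⟩

theorem IsNotAKnotInterp.eq_zero {N : ℕ} {l : ℕ → ℝ} {q : ℕ → ℝ[X]} (hN : 3 ≤ N)
    (hl : ∀ i < N, l i < l (i + 1)) (hq : IsNotAKnotInterp N l 0 q) : ∀ i < N, q i = 0 := by
  obtain ⟨n, rfl⟩ := Nat.exists_eq_add_of_le' hN
  obtain ⟨hdeg, hC₀, hC₁, hC₂, hnak₀, hnak, hleft, hend⟩ := hq
  simp only [Pi.zero_apply, show n + 3 - 2 = n + 1 by omega, show n + 3 - 1 = n + 2 by omega] at *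
  have hne : ∀ i < n + 3, l i ≠ l (i + 1) := fun i hi => (hl i hi).ne
  have hright : ∀ i < n + 3, (q i).eval (l (i + 1)) = 0 := by
    intro i hi
    rcases (show i + 1 < n + 3 ∨ i = n + 2 by omega) with h | rfl
    · rw [hC₀ i h]; exact hleft (i + 1) h
    · exact hend
  -- `M i` is the second derivative at `l i`; at `l (n + 3)` only the left piece is available
  set M : ℕ → ℝ := fun i => (q (min i (n + 2))).derivative.derivative.eval (l i) with hM
  have hM_left : ∀ i < n + 3, (q i).derivative.derivative.eval (l i) = M i := by
    intro i hi; simp only [hM, min_eq_left (show i ≤ n + 2 by omega)]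
  have hM_right : ∀ i < n + 3, (q i).derivative.derivative.eval (l (i + 1)) = M (i + 1) := by
    intro i hi
    rcases (show i + 1 < n + 3 ∨ i = n + 2 by omega) with h | rfl
    · rw [hC₂ i h, hM_left (i + 1) h]
    · simp [hM]
  have hmom : ∀ i ≤ n + 1, (l (i + 1) - l i) * (M i + 2 * M (i + 1)) +
      (l (i + 1 + 1) - l (i + 1)) * (2 * M (i + 1) + M (i + 2)) = 0 := by
    intro i hi
    have h := cubic_moment_equation (hdeg i (by omega)) (hdeg (i + 1) (by omega))
      (hne i (by omega)) (hne (i + 1) (by omega)) (hleft i (by omega)) (hright i (by omega))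
      (hleft (i + 1) (by omega)) (hright (i + 1) (by omega)) (hC₁ i (by omega))
    rwa [hM_left i (by omega), hM_right i (by omega), hM_left (i + 1) (by omega),
      hM_right (i + 1) (by omega)] at h
  have hcol₀ := cubic_second_derivative_collinear (hdeg 0 (by omega)) (l 0) (l 1) (l 2)
  rw [hM_left 0 (by omega), hM_right 0 (by omega), hnak₀, hM_right 1 (by omega)] at hcol₀
  have hcol := cubic_second_derivative_collinear (hdeg (n + 1) (by omega))
    (l (n + 1)) (l (n + 2)) (l (n + 3))
  rw [hM_left (n + 1) (by omega), hM_right (n + 1) (by omega), hnak,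
    hM_right (n + 2) (by omega)] at hcol
  have hM_zero := notAKnot_moments_eq_zero (h := fun i => l (i + 1) - l i) (M := M)
    (fun i hi => sub_pos.2 (hl i (by omega))) hmom hcol₀ hcol
  intro i hi
  exact cubic_eq_zero_of_eval_eq_zero (hdeg i hi) (hne i hi) (hleft i hi) (hright i hi)
    (by rw [hM_left i hi, hM_zero i (by omega)]) (by rw [hM_right i hi, hM_zero (i + 1) hi])

lemma eval_derivative_eq_zero_of_cube_dvd {p : ℝ[X]} {t : ℝ} (h : (X - C t) ^ 3 ∣ p) :
    p.eval t = 0 ∧ p.derivative.eval t = 0 ∧ p.derivative.derivative.eval t = 0 := by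
  obtain ⟨r, rfl⟩ := h
  simp [derivative_mul, derivative_pow]

noncomputable def knotCube (l : ℕ → ℝ) (j i : ℕ) : ℝ[X] :=
  if j + 2 ≤ i then (X - C (l (j + 2))) ^ 3 else 0

/-- `splinePiece l n p c i` is the piece on `[l i, l (i + 1)]` of
`p(x) + ∑ⱼ cⱼ (x - l (j + 2))₊³`. Its knots `l 2, …, l (n + 1)` skip `l 1` and `l (n + 2)`,
which is the not-a-knot condition for `N = n + 3` breakpoint intervals. -/
noncomputable def splinePiece (l : ℕ → ℝ) (n : ℕ) (p : ℝ[X]) (c : Fin n → ℝ) (i : ℕ) :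
    ℝ[X] :=
  p + ∑ j : Fin n, c j • knotCube l j i

section splinePiece

variable {l : ℕ → ℝ} {n : ℕ} {p : ℝ[X]} {c : Fin n → ℝ}

lemma knotCube_succ_sub (j i : ℕ) :
    knotCube l j (i + 1) - knotCube l j i =
      if j + 1 = i then (X - C (l (i + 1))) ^ 3 else 0 := by
  unfold knotCube
  by_cases h : j + 1 = i
  · subst h
    simp
  · rw [if_neg h]
    split_ifs <;> first | omega | simp

@[simp]
lemma splinePiece_zero : splinePiece l n p c 0 = p := by
  simp [splinePiece, knotCube]

lemma splinePiece_eq_of_iff {i i' : ℕ} (h : ∀ j < n, j + 2 ≤ i ↔ j + 2 ≤ i') :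
    splinePiece l n p c i = splinePiece l n p c i' := by
  unfold splinePiece knotCube
  congr 1
  refine Finset.sum_congr rfl fun j _ => ?_
  simp only [h j j.2]

lemma cube_dvd_splinePiece_succ_sub (i : ℕ) :
    (X - C (l (i + 1))) ^ 3 ∣ splinePiece l n p c (i + 1) - splinePiece l n p c i := by
  simp only [splinePiece, add_sub_add_left_eq_sub, ← Finset.sum_sub_distrib, ← smul_sub,
    knotCube_succ_sub]
  refine Finset.dvd_sum fun j _ => ?_
  split_ifs
  · rw [smul_eq_C_mul]; exact dvd_mul_left _ _
  · simp

lemma splinePiece_succ_sub (j : Fin n) :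
    splinePiece l n p c (j + 2) - splinePiece l n p c (j + 1) =
      c j • (X - C (l (j + 2))) ^ 3 := by
  simp only [splinePiece, add_sub_add_left_eq_sub, ← Finset.sum_sub_distrib, ← smul_sub,
    knotCube_succ_sub, smul_ite, smul_zero, add_left_inj, Fin.val_inj]
  simp

lemma degree_splinePiece_le (hp : p.degree ≤ 3) (i : ℕ) :
    (splinePiece l n p c i).degree ≤ 3 := by
  refine (degree_add_le _ _).trans
    (max_le hp ((degree_sum_le _ _).trans (Finset.sup_le fun j _ => ?_)))
  refine (degree_smul_le _ _).trans ?_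
  unfold knotCube
  split_ifs
  · compute_degree
  · simp

lemma isNotAKnotInterp_splinePiece {f : ℝ → ℝ} (hp : p.degree ≤ 3)
    (hf : ∀ i ≤ n + 3, (splinePiece l n p c i).eval (l i) = f (l i)) :
    IsNotAKnotInterp (n + 3) l f (splinePiece l n p c) := by
  have hjump (i : ℕ) := eval_derivative_eq_zero_of_cube_dvd
    (cube_dvd_splinePiece_succ_sub (l := l) (p := p) (c := c) i)
  simp only [eval_sub, derivative_sub, sub_eq_zero] at hjump
  have hlast : splinePiece l n p c (n + 2) = splinePiece l n p c (n + 3) :=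
    splinePiece_eq_of_iff fun j hj => by omega
  refine ⟨fun i _ => degree_splinePiece_le hp i, fun i _ => (hjump i).1.symm,
    fun i _ => (hjump i).2.1.symm, fun i _ => (hjump i).2.2.symm,
    splinePiece_eq_of_iff fun j _ => by omega, ?_, fun i hi => hf i hi.le, ?_⟩
  · exact splinePiece_eq_of_iff fun j hj => by omega
  · simpa [hlast] using hf (n + 3) le_rfl

end splinePiece

noncomputable def splineNodeValues (l : ℕ → ℝ) (n : ℕ) :
    degreeLT ℝ 4 × (Fin n → ℝ) →ₗ[ℝ] Fin (n + 4) → ℝ where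
  toFun pc i := (splinePiece l n pc.1 pc.2 i).eval (l i)
  map_add' pc pc' := by
    ext i
    simp [splinePiece, add_smul, Finset.sum_add_distrib]
    ring
  map_smul' a pc := by
    ext i
    simp [splinePiece, mul_smul, eval_finsetSum, mul_add, Finset.mul_sum]

theorem exists_isNotAKnotInterp {N : ℕ} {l : ℕ → ℝ} (hN : 3 ≤ N)
    (hl : ∀ i < N, l i < l (i + 1)) (f : ℝ → ℝ) : ∃ q : ℕ → ℝ[X], IsNotAKnotInterp N l f q := by
  obtain ⟨n, rfl⟩ := Nat.exists_eq_add_of_le' hN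
  have hdeg (p : degreeLT ℝ 4) : (p : ℝ[X]).degree ≤ 3 :=
    Order.le_of_lt_succ (mem_degreeLT.1 p.2)
  have hinj : Function.Injective (splineNodeValues l n) := by
    refine (injective_iff_map_eq_zero _).2 fun pc hpc => ?_
    have hzero := IsNotAKnotInterp.eq_zero hN hl (isNotAKnotInterp_splinePiece (f := 0)
      (hdeg pc.1) fun i hi => congrFun hpc ⟨i, by omega⟩)
    obtain ⟨p, c⟩ := pc
    have hp : (p : ℝ[X]) = 0 := by simpa using hzero 0 (by omega)
    have hc : c = 0 := funext fun j => by
      have h := splinePiece_succ_sub (l := l) (p := p) (c := c) j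
      rw [hzero _ (by omega), hzero _ (by omega), sub_zero, eq_comm, smul_eq_zero] at h
      exact h.resolve_right (pow_ne_zero 3 (X_sub_C_ne_zero _))
    exact Prod.ext (Subtype.ext hp) hc
  have hrank : Module.finrank ℝ (degreeLT ℝ 4 × (Fin n → ℝ)) =
      Module.finrank ℝ (Fin (n + 4) → ℝ) := by
    simp [Module.finrank_prod, (degreeLTEquiv ℝ 4).finrank_eq]
    omega
  obtain ⟨pc, hpc⟩ := (LinearMap.injective_iff_surjective_of_finrank_eq_finrank hrank).1 hinj
    fun i => f (l i)
  exact ⟨_, isNotAKnotInterp_splinePiece (hdeg pc.1) fun i hi => congrFun hpc ⟨i, by omega⟩⟩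

theorem stmt2_general (N : ℕ) (hN : 3 ≤ N) (l : ℕ → ℝ) (hl : ∀ i < N, l i < l (i + 1))
    (f : ℝ → ℝ) :
    ∃ q : ℕ → Polynomial ℝ, IsNotAKnotInterp N l f q ∧
      ∀ q' : ℕ → Polynomial ℝ, IsNotAKnotInterp N l f q' → ∀ i < N, q' i = q i := by
  obtain ⟨q, hq⟩ := exists_isNotAKnotInterp hN hl f
  refine ⟨q, hq, fun q' hq' i hi => ?_⟩
  have hdiff := hq'.sub hq
  rw [sub_self] at hdiff
  exact sub_eq_zero.1 (hdiff.eq_zero hN hl i hi)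

/-- **Lemma 4.2 (unique existence of the not-a-knot interpolant).**
For any `f ∈ C²([a,b])` and any breakpoint sequence `a = l 0 < ⋯ < l N = b` with `N ≥ 3`,
there exists a unique not-a-knot cubic spline in `𝕊₃²(X_b)` that interpolates `f`
(uniqueness of the cubic pieces `q i` for `i < N`). -/
theorem stmt2 (N : ℕ) (hN : 3 ≤ N) (l : ℕ → ℝ) (hl : ∀ i < N, l i < l (i + 1))
    (f : ℝ → ℝ) (hf : ContDiffOn ℝ 2 f (Set.Icc (l 0) (l N))) :
    ∃ q : ℕ → Polynomial ℝ, IsNotAKnotInterp N l f q ∧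
      ∀ q' : ℕ → Polynomial ℝ, IsNotAKnotInterp N l f q' → ∀ i < N, q' i = q i :=
  stmt2_general N hN l hl f
end

section
/- Let N ≥ 5 and let A ∈ ℝ^{(N+1)×(N+1)} be the matrix with rows indexed by 0,…,N given by: row 0 has entries λ₁, −1, μ₁ in columns 0, 1, 2; row i for 1 ≤ i ≤ N−1 has entries μ_i, 2, λ_i in columns i−1, i, i+1; row N has entries λ_{N−1}, −1, μ_{N−1} in columns N−2, N−1, N; all other entries are zero, where μ_i, λ_i ∈ (0,1) and μ_i + λ_i = 1 for every i = 1,…,N−1. Then A is invertible and ‖A⁻¹‖_∞ < 18. -/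
/-!
Let `m = |x_k|` be the largest of `|x_1|, …, |x_{N-1}|` for a solution of `A x = y`. At an
interior maximum the row `μ x_{k-1} + 2 x_k + λ x_{k+1} = y_k` is diagonally dominant, so
`m ≤ ‖y‖_∞`. Near the ends dominance fails, but since `μ₁ + λ₁ = 1` the sum of rows 0 and 1 is
`x_0 + x_1 + x_2 = y_0 + y_1`; eliminating `x_0` with it leaves
`(1 + λ₁) x_1 + (2λ₁ - 1) x_2 = λ₁ y_1 - μ₁ y_0`, which is dominant when `λ₁ ≥ 1/2` and becomes
so after adding `(1 - 2λ₁)/2` times row 2 otherwise; the other end is symmetric. Hence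
`m ≤ 3 ‖y‖_∞`, and `|x_0| ≤ |y_0| + |y_1| + 2m ≤ 8 ‖y‖_∞`. Applying `‖x‖_∞ ≤ 8 ‖A x‖_∞` to
`x = A⁻¹ s`, with `s` the signs of a row of `A⁻¹`, bounds that row's absolute sum by `8`.
-/

/-- The matrix norm induced by the max norm on `ℝⁿ`: the maximum absolute row sum. -/
noncomputable def rowSumNorm {n : ℕ} (A : Matrix (Fin n) (Fin n) ℝ) : ℝ :=
  ⨆ i, ∑ j, |A i j|

open Finset Matrix

theorem isUnit_of_forall_abs_le_mul {ι : Type*} [Fintype ι] [DecidableEq ι]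
    {A : Matrix ι ι ℝ} {K : ℝ}
    (h : ∀ (v : ι → ℝ) (c : ℝ), (∀ i, |(A *ᵥ v) i| ≤ c) → ∀ i, |v i| ≤ K * c) :
    IsUnit A := by
  refine mulVec_injective_iff_isUnit.mp fun u v huv => funext fun i => ?_
  have := h (u - v) 0 (fun j => by simp [mulVec_sub, huv]) i
  rw [mul_zero, Pi.sub_apply] at this
  exact sub_eq_zero.mp (abs_nonpos_iff.mp this)

theorem rowSumNorm_inv_le_of_forall_abs_le_mul {n : ℕ} [NeZero n]
    {A : Matrix (Fin n) (Fin n) ℝ} {K : ℝ}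
    (h : ∀ (v : Fin n → ℝ) (c : ℝ), (∀ i, |(A *ᵥ v) i| ≤ c) → ∀ i, |v i| ≤ K * c) :
    rowSumNorm A⁻¹ ≤ K := by
  have hdet : IsUnit A.det := (isUnit_iff_isUnit_det A).mp (isUnit_of_forall_abs_le_mul h)
  refine ciSup_le fun i => ?_
  let s : Fin n → ℝ := fun j => SignType.sign (A⁻¹ i j)
  have hs : ∀ j, |(A *ᵥ (A⁻¹ *ᵥ s)) j| ≤ 1 := by
    intro j
    rw [mulVec_mulVec, mul_nonsing_inv A hdet, one_mulVec]
    show |((SignType.sign (A⁻¹ i j) : SignType) : ℝ)| ≤ 1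
    cases SignType.sign (A⁻¹ i j) <;> simp
  have hrow : (A⁻¹ *ᵥ s) i = ∑ j, |A⁻¹ i j| := by
    simp only [mulVec, dotProduct, s, self_mul_sign]
  simpa [hrow] using (le_abs_self _).trans (h _ 1 hs i)

section

variable {μ lam μ' lam' x₀ x₁ x₂ x₃ y₀ y₁ y₂ c : ℝ}

theorem abs_le_of_interior_row (hμ : 0 ≤ μ) (hlam : 0 ≤ lam) (hsum : μ + lam = 1)
    (h : μ * x₀ + 2 * x₁ + lam * x₂ = y₁) (hy₁ : |y₁| ≤ c)
    (hx₀ : |x₀| ≤ |x₁|) (hx₂ : |x₂| ≤ |x₁|) : |x₁| ≤ c := by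
  have h2 : 2 * |x₁| ≤ |y₁| + μ * |x₀| + lam * |x₂| := by
    calc 2 * |x₁| = |y₁ + -μ * x₀ + -lam * x₂| := by
          rw [← abs_two, ← abs_mul]; congr 1; linear_combination h
      _ ≤ |y₁| + |-μ * x₀| + |-lam * x₂| := abs_add_three _ _ _
      _ = |y₁| + μ * |x₀| + lam * |x₂| := by
          rw [abs_mul, abs_mul, abs_neg, abs_neg, abs_of_nonneg hμ, abs_of_nonneg hlam]
  have hconv : μ * |x₁| + lam * |x₁| = |x₁| := by rw [← add_mul, hsum, one_mul]
  nlinarith [mul_le_mul_of_nonneg_left hx₀ hμ, mul_le_mul_of_nonneg_left hx₂ hlam]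

theorem abs_endpoint_le_of_corner_rows (hsum : μ + lam = 1)
    (h₀ : lam * x₀ - x₁ + μ * x₂ = y₀) (h₁ : μ * x₀ + 2 * x₁ + lam * x₂ = y₁) :
    |x₀| ≤ |y₀| + |y₁| + |x₁| + |x₂| := by
  have hx₀ : x₀ = y₀ + y₁ + -x₁ + -x₂ := by
    linear_combination h₀ + h₁ - (x₀ + x₂) * hsum
  calc |x₀| ≤ |y₀ + y₁ + -x₁| + |-x₂| := hx₀ ▸ abs_add_le _ _
    _ ≤ |y₀| + |y₁| + |-x₁| + |-x₂| := by gcongr; exact abs_add_three _ _ _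
    _ = |y₀| + |y₁| + |x₁| + |x₂| := by rw [abs_neg, abs_neg]

theorem abs_le_of_corner_rows (hμ : 0 ≤ μ) (hlam : 0 ≤ lam) (hsum : μ + lam = 1)
    (hμ' : 0 ≤ μ') (hlam' : 0 ≤ lam') (hsum' : μ' + lam' = 1)
    (h₀ : lam * x₀ - x₁ + μ * x₂ = y₀) (h₁ : μ * x₀ + 2 * x₁ + lam * x₂ = y₁)
    (h₂ : μ' * x₁ + 2 * x₂ + lam' * x₃ = y₂)
    (hy₀ : |y₀| ≤ c) (hy₁ : |y₁| ≤ c) (hy₂ : |y₂| ≤ c)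
    (hx₂ : |x₂| ≤ |x₁|) (hx₃ : |x₃| ≤ |x₁|) : |x₁| ≤ 3 * c := by
  have hc : 0 ≤ c := (abs_nonneg _).trans hy₀
  set r := lam * y₁ - μ * y₀ with hr_def
  have hrow : (1 + lam) * x₁ + (2 * lam - 1) * x₂ = r := by
    linear_combination (-μ) * h₀ + lam * h₁ + (-x₁ + (μ - lam + 1) * x₂) * hsum
  have hr : |r| ≤ c := by
    calc |r| ≤ |lam * y₁| + |μ * y₀| := abs_sub _ _
      _ = lam * |y₁| + μ * |y₀| := by rw [abs_mul, abs_mul, abs_of_nonneg hμ, abs_of_nonneg hlam]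
      _ ≤ lam * c + μ * c := by gcongr
      _ = c := by linear_combination c * hsum
  rcases le_or_gt (1 / 2) lam with hlam_ge | hlam_lt
  · have h : (1 + lam) * |x₁| ≤ c + (2 * lam - 1) * |x₂| := by
      calc (1 + lam) * |x₁| = |r + -(2 * lam - 1) * x₂| := by
            rw [← abs_of_nonneg (by linarith : 0 ≤ 1 + lam), ← abs_mul]
            congr 1; linear_combination hrow
        _ ≤ |r| + |-(2 * lam - 1) * x₂| := abs_add_le _ _
        _ ≤ c + (2 * lam - 1) * |x₂| := by
            rw [abs_mul, abs_neg, abs_of_nonneg (by linarith : 0 ≤ 2 * lam - 1)]; gcongr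
    nlinarith [mul_le_mul_of_nonneg_left hx₂ (by linarith : 0 ≤ 2 * lam - 1)]
  · have hlam₂ : 0 ≤ 1 - 2 * lam := by linarith
    have hy₂x₃ : |y₂ + -lam' * x₃| ≤ c + lam' * |x₃| := by
      calc |y₂ + -lam' * x₃| ≤ |y₂| + |-lam' * x₃| := abs_add_le _ _
        _ ≤ c + lam' * |x₃| := by rw [abs_mul, abs_neg, abs_of_nonneg hlam']; gcongr
    have h : (2 * (1 + lam) + (1 - 2 * lam) * μ') * |x₁|
        ≤ 2 * c + (1 - 2 * lam) * (c + lam' * |x₃|) := by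
      calc (2 * (1 + lam) + (1 - 2 * lam) * μ') * |x₁|
          = |2 * r + (1 - 2 * lam) * (y₂ + -lam' * x₃)| := by
            rw [← abs_of_nonneg (by nlinarith : 0 ≤ 2 * (1 + lam) + (1 - 2 * lam) * μ'),
              ← abs_mul]
            congr 1; linear_combination 2 * hrow + (1 - 2 * lam) * h₂
        _ ≤ |2 * r| + |(1 - 2 * lam) * (y₂ + -lam' * x₃)| := abs_add_le _ _
        _ ≤ 2 * c + (1 - 2 * lam) * (c + lam' * |x₃|) := by
            rw [abs_mul, abs_mul, abs_two, abs_of_nonneg hlam₂]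
            gcongr
    nlinarith [mul_le_mul_of_nonneg_left hx₃ hlam',
      mul_nonneg hlam₂ (abs_nonneg x₁)]

end

theorem abs_le_three_mul_of_notAKnot_rows {N : ℕ} (hN : 4 ≤ N) {μ lam x y : ℕ → ℝ} {c : ℝ}
    (hμlam : ∀ i, 1 ≤ i → i ≤ N - 1 → 0 ≤ μ i ∧ 0 ≤ lam i ∧ μ i + lam i = 1)
    (hfirst : lam 1 * x 0 - x 1 + μ 1 * x 2 = y 0)
    (hmid : ∀ i, 1 ≤ i → i ≤ N - 1 → μ i * x (i - 1) + 2 * x i + lam i * x (i + 1) = y i)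
    (hlast : lam (N - 1) * x (N - 2) - x (N - 1) + μ (N - 1) * x N = y N)
    (hy : ∀ i ≤ N, |y i| ≤ c) :
    ∀ i, 1 ≤ i → i ≤ N - 1 → |x i| ≤ 3 * c := by
  obtain ⟨k, hk, hkmax⟩ := exists_max_image (Icc 1 (N - 1)) (fun i => |x i|) ⟨1, by simp; omega⟩
  rw [mem_Icc] at hk
  replace hkmax : ∀ i, 1 ≤ i → i ≤ N - 1 → |x i| ≤ |x k| := fun i h₁ h₂ =>
    hkmax i (mem_Icc.2 ⟨h₁, h₂⟩)
  suffices |x k| ≤ 3 * c from fun i h₁ h₂ => (hkmax i h₁ h₂).trans this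
  rcases (by omega : k = 1 ∨ k = N - 1 ∨ 2 ≤ k ∧ k ≤ N - 2) with rfl | rfl | ⟨hk₁, hk₂⟩
  · obtain ⟨hμ₁, hlam₁, hsum₁⟩ := hμlam 1 le_rfl (by omega)
    obtain ⟨hμ₂, hlam₂, hsum₂⟩ := hμlam 2 (by omega) (by omega)
    exact abs_le_of_corner_rows hμ₁ hlam₁ hsum₁ hμ₂ hlam₂ hsum₂ hfirst
      (hmid 1 le_rfl (by omega)) (hmid 2 (by omega) (by omega))
      (hy 0 (by omega)) (hy 1 (by omega)) (hy 2 (by omega))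
      (hkmax 2 (by omega) (by omega)) (hkmax 3 (by omega) (by omega))
  · obtain ⟨hμ₁, hlam₁, hsum₁⟩ := hμlam (N - 1) (by omega) le_rfl
    obtain ⟨hμ₂, hlam₂, hsum₂⟩ := hμlam (N - 2) (by omega) (by omega)
    have h₁ : μ (N - 1) * x (N - 2) + 2 * x (N - 1) + lam (N - 1) * x N = y (N - 1) := by
      simpa only [show N - 1 - 1 = N - 2 by omega, show N - 1 + 1 = N by omega]
        using hmid (N - 1) (by omega) le_rfl
    have h₂ : μ (N - 2) * x (N - 3) + 2 * x (N - 2) + lam (N - 2) * x (N - 1) = y (N - 2) := by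
      simpa only [show N - 2 - 1 = N - 3 by omega, show N - 2 + 1 = N - 1 by omega]
        using hmid (N - 2) (by omega) (by omega)
    exact abs_le_of_corner_rows (x₀ := x N) (x₂ := x (N - 2)) (x₃ := x (N - 3))
      hlam₁ hμ₁ (by linarith) hlam₂ hμ₂ (by linarith) (by linarith) (by linarith) (by linarith)
      (hy N le_rfl) (hy (N - 1) (by omega)) (hy (N - 2) (by omega))
      (hkmax (N - 2) (by omega) (by omega)) (hkmax (N - 3) (by omega) (by omega))
  · obtain ⟨hμ, hlam, hsum⟩ := hμlam k (by omega) (by omega)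
    have hc : 0 ≤ c := (abs_nonneg _).trans (hy 0 (Nat.zero_le N))
    have := abs_le_of_interior_row hμ hlam hsum (hmid k (by omega) (by omega))
      (hy k (by omega)) (hkmax (k - 1) (by omega) (by omega)) (hkmax (k + 1) (by omega) (by omega))
    linarith

theorem abs_le_of_notAKnot_rows {N : ℕ} (hN : 4 ≤ N) {μ lam x y : ℕ → ℝ} {c : ℝ}
    (hμlam : ∀ i, 1 ≤ i → i ≤ N - 1 → 0 ≤ μ i ∧ 0 ≤ lam i ∧ μ i + lam i = 1)
    (hfirst : lam 1 * x 0 - x 1 + μ 1 * x 2 = y 0)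
    (hmid : ∀ i, 1 ≤ i → i ≤ N - 1 → μ i * x (i - 1) + 2 * x i + lam i * x (i + 1) = y i)
    (hlast : lam (N - 1) * x (N - 2) - x (N - 1) + μ (N - 1) * x N = y N)
    (hy : ∀ i ≤ N, |y i| ≤ c) :
    ∀ i ≤ N, |x i| ≤ 8 * c := by
  have hinner := abs_le_three_mul_of_notAKnot_rows hN hμlam hfirst hmid hlast hy
  have hc : 0 ≤ c := (abs_nonneg _).trans (hy 0 (Nat.zero_le N))
  intro i hi
  rcases (by omega : i = 0 ∨ i = N ∨ 1 ≤ i ∧ i ≤ N - 1) with rfl | hiN | ⟨hi₁, hi₂⟩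
  · have := abs_endpoint_le_of_corner_rows (hμlam 1 le_rfl (by omega)).2.2 hfirst
      (hmid 1 le_rfl (by omega))
    linarith [hy 0 (by omega), hy 1 (by omega), hinner 1 le_rfl (by omega),
      hinner 2 (by omega) (by omega)]
  · rw [hiN]
    have h₁ : μ (N - 1) * x (N - 2) + 2 * x (N - 1) + lam (N - 1) * x N = y (N - 1) := by
      simpa only [show N - 1 - 1 = N - 2 by omega, show N - 1 + 1 = N by omega]
        using hmid (N - 1) (by omega) le_rfl
    have hsum : lam (N - 1) + μ (N - 1) = 1 := by
      linarith [(hμlam (N - 1) (by omega) le_rfl).2.2]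
    have := abs_endpoint_le_of_corner_rows (x₀ := x N) (x₁ := x (N - 1)) (x₂ := x (N - 2))
      (y₀ := y N) hsum (by linarith) (by linarith)
    linarith [hy N le_rfl, hy (N - 1) (by omega), hinner (N - 1) (by omega) le_rfl,
      hinner (N - 2) (by omega) (by omega)]
  · linarith [hinner i hi₁ hi₂]

theorem sum_range_ite_three_mul {R : Type*} [NonAssocSemiring R] {n p q r : ℕ} (hp : p < n)
    (hq : q < n) (hr : r < n) (hpq : p ≠ q) (hpr : p ≠ r) (hqr : q ≠ r) (a b c : R) (x : ℕ → R) :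
    ∑ j ∈ range n, (if j = p then a else if j = q then b else if j = r then c else 0) * x j =
      a * x p + b * x q + c * x r := by
  have h : ∀ j, (if j = p then a else if j = q then b else if j = r then c else 0) * x j =
      (if j = p then a * x p else 0) + (if j = q then b * x q else 0) +
        (if j = r then c * x r else 0) := by
    intro j
    split_ifs <;> subst_vars <;> simp_all
  simp only [h, sum_add_distrib, sum_ite_eq', mem_range, hp, hq, hr, if_true]

def notAKnotEntry (N : ℕ) (μ lam : ℕ → ℝ) (i j : ℕ) : ℝ :=
  if i = 0 then
    (if j = 0 then lam 1 else if j = 1 then -1 else if j = 2 then μ 1 else 0)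
  else if i = N then
    (if j = N - 2 then lam (N - 1) else if j = N - 1 then -1 else if j = N then μ (N - 1) else 0)
  else
    (if j + 1 = i then μ i else if j = i then 2 else if j = i + 1 then lam i else 0)

def notAKnotMatrix (N : ℕ) (μ lam : ℕ → ℝ) : Matrix (Fin (N + 1)) (Fin (N + 1)) ℝ :=
  Matrix.of fun i j => notAKnotEntry N μ lam i j

section

open Fin.NatCast

variable {N : ℕ} {μ lam : ℕ → ℝ}

theorem mulVec_notAKnotMatrix_natCast (v : Fin (N + 1) → ℝ) {i : ℕ} (hi : i ≤ N) :
    (notAKnotMatrix N μ lam *ᵥ v) i = ∑ j ∈ range (N + 1), notAKnotEntry N μ lam i j * v j := by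
  rw [← Fin.sum_univ_eq_sum_range (fun j => notAKnotEntry N μ lam i j * v j)]
  simp [Matrix.mulVec, dotProduct, notAKnotMatrix, Fin.val_cast_of_lt (Nat.lt_succ_of_le hi)]

theorem mulVec_notAKnotMatrix_first (hN : 2 ≤ N) (v : Fin (N + 1) → ℝ) :
    (notAKnotMatrix N μ lam *ᵥ v) (0 : ℕ) =
      lam 1 * v (0 : ℕ) - v (1 : ℕ) + μ 1 * v (2 : ℕ) := by
  rw [mulVec_notAKnotMatrix_natCast v (Nat.zero_le N)]
  simp only [notAKnotEntry, ↓reduceIte]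
  rw [sum_range_ite_three_mul] <;> first | omega | ring

theorem mulVec_notAKnotMatrix_interior (v : Fin (N + 1) → ℝ) {i : ℕ} (hi₁ : 1 ≤ i)
    (hi₂ : i ≤ N - 1) :
    (notAKnotMatrix N μ lam *ᵥ v) i =
      μ i * v (i - 1 : ℕ) + 2 * v (i : ℕ) + lam i * v (i + 1 : ℕ) := by
  have h : ∀ j, notAKnotEntry N μ lam i j =
      if j = i - 1 then μ i else if j = i then 2 else if j = i + 1 then lam i else 0 := by
    intro j
    simp only [notAKnotEntry, if_neg (by omega : i ≠ 0), if_neg (by omega : i ≠ N)]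
    split_ifs <;> first | rfl | omega
  rw [mulVec_notAKnotMatrix_natCast v (by omega)]
  simp only [h]
  rw [sum_range_ite_three_mul] <;> omega

theorem mulVec_notAKnotMatrix_last (hN : 2 ≤ N) (v : Fin (N + 1) → ℝ) :
    (notAKnotMatrix N μ lam *ᵥ v) (N : ℕ) =
      lam (N - 1) * v (N - 2 : ℕ) - v (N - 1 : ℕ) + μ (N - 1) * v (N : ℕ) := by
  rw [mulVec_notAKnotMatrix_natCast v le_rfl]
  simp only [notAKnotEntry, if_neg (by omega : N ≠ 0), ↓reduceIte]
  rw [sum_range_ite_three_mul] <;> first | omega | ring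

theorem abs_le_of_abs_mulVec_notAKnotMatrix_le (hN : 4 ≤ N)
    (hμlam : ∀ i, 1 ≤ i → i ≤ N - 1 → 0 ≤ μ i ∧ 0 ≤ lam i ∧ μ i + lam i = 1)
    (v : Fin (N + 1) → ℝ) (c : ℝ) (hv : ∀ i, |(notAKnotMatrix N μ lam *ᵥ v) i| ≤ c)
    (i : Fin (N + 1)) : |v i| ≤ 8 * c := by
  simpa using abs_le_of_notAKnot_rows (x := fun n : ℕ => v n)
    (y := fun n : ℕ => (notAKnotMatrix N μ lam *ᵥ v) n) hN hμlam
    (mulVec_notAKnotMatrix_first (by omega) v).symm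
    (fun k h₁ h₂ => (mulVec_notAKnotMatrix_interior v h₁ h₂).symm)
    (mulVec_notAKnotMatrix_last (by omega) v).symm (fun k _ => hv _) i (by omega)

end

/-- **Lemma 4.7.**  Let `N ≥ 5` and let `A ∈ ℝ^{(N+1)×(N+1)}` be the coefficient matrix of
the not-a-knot cubic spline system: row `0` has entries `λ₁, −1, μ₁` in columns `0, 1, 2`;
row `i` (`1 ≤ i ≤ N−1`) has entries `μ_i, 2, λ_i` in columns `i−1, i, i+1`; row `N` has
entries `λ_{N−1}, −1, μ_{N−1}` in columns `N−2, N−1, N`; all other entries zero, where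
`μ_i, λ_i ∈ (0,1)` and `μ_i + λ_i = 1` for `i = 1, …, N−1`.  Then `A` is invertible and
`‖A⁻¹‖_∞ < 18`. -/
theorem stmt7 (N : ℕ) (hN : 5 ≤ N)
    (μ lam : ℕ → ℝ)
    (hμlam : ∀ i, 1 ≤ i → i ≤ N - 1 →
      μ i ∈ Set.Ioo (0 : ℝ) 1 ∧ lam i ∈ Set.Ioo (0 : ℝ) 1 ∧ μ i + lam i = 1)
    (A : Matrix (Fin (N + 1)) (Fin (N + 1)) ℝ)
    (hA : ∀ i j : Fin (N + 1), A i j =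
      if (i : ℕ) = 0 then
        (if (j : ℕ) = 0 then lam 1 else if (j : ℕ) = 1 then -1
         else if (j : ℕ) = 2 then μ 1 else 0)
      else if (i : ℕ) = N then
        (if (j : ℕ) = N - 2 then lam (N - 1) else if (j : ℕ) = N - 1 then -1
         else if (j : ℕ) = N then μ (N - 1) else 0)
      else
        (if (j : ℕ) + 1 = (i : ℕ) then μ (i : ℕ) else if (j : ℕ) = (i : ℕ) then 2
         else if (j : ℕ) = (i : ℕ) + 1 then lam (i : ℕ) else 0)) :
    IsUnit A ∧ rowSumNorm A⁻¹ < 18 := by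
  obtain rfl : A = notAKnotMatrix N μ lam := Matrix.ext hA
  have hbound := abs_le_of_abs_mulVec_notAKnotMatrix_le (by omega : 4 ≤ N) fun i h₁ h₂ =>
    have ⟨hμ, hlam, hsum⟩ := hμlam i h₁ h₂
    ⟨hμ.1.le, hlam.1.le, hsum⟩
  exact ⟨isUnit_of_forall_abs_le_mul hbound,
    (rowSumNorm_inv_le_of_forall_abs_le_mul hbound).trans_lt (by norm_num)⟩
end
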